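/- In the binary system (β = 2), let X be a natural number, m a number of copies, and K ≥ 1. If the multi-number carry value transformation of m copies of X equals P, i.e. CVT_2(X, X, …, X) [m copies] = P, then the multi-number carry value transformation of m copies of X^K satisfies CVT_2(X^K, X^K, …, X^K) [m copies] = P·X^{K−1}. -/

import Mathlib

/-- The `i`-th base-`β` digit of `X`. -/
def digit (β X i : ℕ) : ℕ := X / β ^ i % β

/-- Column sum at digit position `i` of a list of naturals in base `β`. -/
def colSum (β : ℕ) (L : List ℕ) (i : ℕ) : ℕ := (L.map fun X => digit β X i).sum

/-- Multi-number XOR in base `β`. -/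
noncomputable def XORb (β : ℕ) (L : List ℕ) : ℕ := ∑ᶠ i : ℕ, (colSum β L i % β) * β ^ i

/-- Multi-number carry value transformation in base `β`. -/
noncomputable def CVTb (β : ℕ) (L : List ℕ) : ℕ := ∑ᶠ i : ℕ, (colSum β L i / β) * β ^ (i + 1)

/-!
In base 2 every digit is 0 or 1, so the column sums of `m` copies of `Y` are `m` or `0`, and each
column carries `⌊m/2⌋` times its digit. Hence `CVT₂(Y, …, Y) = 2⌊m/2⌋ · Y` is linear in `Y`, and
the identity for `X ^ K = X * X ^ (K - 1)` follows from the one for `X`.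
-/

lemma sum_range_digit_mul_pow (β Y n : ℕ) :
    ∑ i ∈ Finset.range n, digit β Y i * β ^ i = Y % β ^ n := by
  induction n with
  | zero => simp [Nat.mod_one]
  | succ n ih =>
    rw [Finset.sum_range_succ, ih, Nat.mod_pow_succ, digit]
    ring

lemma digit_eq_zero_of_lt_pow {β Y i : ℕ} (h : Y < β ^ i) : digit β Y i = 0 := by
  simp [digit, Nat.div_eq_of_lt h]

lemma digit_lt {β : ℕ} (hβ : 0 < β) {Y i : ℕ} : digit β Y i < β :=
  Nat.mod_lt _ hβ

lemma colSum_replicate (β m Y i : ℕ) : colSum β (List.replicate m Y) i = m * digit β Y i := by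
  simp [colSum, List.map_replicate, List.sum_replicate]

lemma CVTb_eq_sum_range {β n : ℕ} {L : List ℕ} (hβ : 0 < β) (hL : ∀ X ∈ L, X < β ^ n) :
    CVTb β L = ∑ i ∈ Finset.range n, colSum β L i / β * β ^ (i + 1) := by
  refine finsum_eq_finsetSum_of_support_subset _ fun i hi => ?_
  by_contra hin
  have hcol : colSum β L i = 0 := by
    refine List.sum_eq_zero fun d hd => ?_
    obtain ⟨X, hX, rfl⟩ := List.mem_map.mp hd
    have hni : n ≤ i := by simpa using hin
    exact digit_eq_zero_of_lt_pow ((hL X hX).trans_le (Nat.pow_le_pow_right hβ hni))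
  simp [hcol] at hi

lemma mul_div_two_of_le_one {m d : ℕ} (hd : d ≤ 1) : m * d / 2 = m / 2 * d := by
  interval_cases d <;> simp

theorem CVTb_two_replicate (m Y : ℕ) : CVTb 2 (List.replicate m Y) = 2 * (m / 2) * Y := by
  have hY : ∀ X ∈ List.replicate m Y, X < 2 ^ Y := by
    simp only [List.mem_replicate]
    rintro X ⟨-, rfl⟩
    exact Nat.lt_two_pow_self
  have hcarry : ∀ i ∈ Finset.range Y,
      colSum 2 (List.replicate m Y) i / 2 * 2 ^ (i + 1) = 2 * (m / 2) * (digit 2 Y i * 2 ^ i) := by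
    intro i _
    rw [colSum_replicate, mul_div_two_of_le_one (Nat.le_of_lt_succ (digit_lt two_pos)), pow_succ]
    ring
  rw [CVTb_eq_sum_range two_pos hY, Finset.sum_congr rfl hcarry, ← Finset.mul_sum,
    sum_range_digit_mul_pow, Nat.mod_eq_of_lt Nat.lt_two_pow_self]

theorem stmt_9 (X m K P : ℕ) (hK : 1 ≤ K)
    (hP : CVTb 2 (List.replicate m X) = P) :
    CVTb 2 (List.replicate m (X ^ K)) = P * X ^ (K - 1) := by
  obtain ⟨k, rfl⟩ := Nat.exists_eq_add_of_le' hK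
  rw [← hP, CVTb_two_replicate, CVTb_two_replicate, Nat.add_sub_cancel, pow_succ']
  ring
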